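/- Let p be a prime, s a real number with s > −1, and α ∈ ℤ_p a nonzero element. Then the integral over {z ∈ ℤ_p : ‖α‖ ≤ ‖z‖ ≤ 1} of ‖z‖^s with respect to the normalized Haar measure μ equals ((1 − p⁻¹)/(1 − p^{−s−1}))·(1 − p^{−s−1}·‖α‖^{s+1}). -/

import Mathlib

/-!
The annulus `‖α‖ ≤ ‖z‖ ≤ 1` is the disjoint union of the spheres `‖z‖ = p^(-k)`,
`0 ≤ k ≤ v(α)`. The ball `‖z‖ ≤ p^(-k)` is the kernel of `ℤ_[p] → ZMod (p^k)`, an additive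
subgroup of index `p^k`, so translation invariance gives it measure `p^(-k)`, and the sphere has
measure `(1 - p⁻¹) p^(-k)`. The integrand is the constant `p^(-ks)` on that sphere, so the
integral is `(1 - p⁻¹)` times a geometric sum in `r = p^(-s-1)`, and `r < 1` because `s > -1`.
-/

open MeasureTheory

lemma Real.zpow_neg_natCast_rpow_add_one {x : ℝ} (hx : 0 < x) (k : ℕ) (s : ℝ) :
    (x ^ (-k : ℤ)) ^ (s + 1) = (x ^ (-s - 1)) ^ k := by
  rw [← Real.rpow_intCast, ← Real.rpow_natCast, ← Real.rpow_mul hx.le, ← Real.rpow_mul hx.le]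
  push_cast
  ring_nf

namespace PadicInt

variable {p : ℕ} [Fact p.Prime]

private lemma one_lt_natCast_prime : (1 : ℝ) < p := mod_cast (Fact.out : p.Prime).one_lt

lemma norm_le_zpow_iff_mem_ker_toZModPow (z : ℤ_[p]) (k : ℕ) :
    ‖z‖ ≤ (p : ℝ) ^ (-k : ℤ) ↔ z ∈ (toZModPow k : ℤ_[p] →+* ZMod (p ^ k)).toAddMonoidHom.ker := by
  rw [norm_le_pow_iff_mem_span_pow, ← ker_toZModPow]
  rfl

lemma index_ker_toZModPow (k : ℕ) :
    (toZModPow k : ℤ_[p] →+* ZMod (p ^ k)).toAddMonoidHom.ker.index = p ^ k := by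
  rw [AddSubgroup.index_ker, AddMonoidHom.range_eq_top_of_surjective _
    (ZMod.ringHom_surjective _), AddSubgroup.card_top, Nat.card_zmod]

lemma setOf_norm_eq_zpow_eq_sdiff (k : ℕ) :
    {z : ℤ_[p] | ‖z‖ = (p : ℝ) ^ (-k : ℤ)} =
      {z | ‖z‖ ≤ (p : ℝ) ^ (-k : ℤ)} \ {z | ‖z‖ ≤ (p : ℝ) ^ (-(k + 1 : ℕ) : ℤ)} := by
  ext z
  have := norm_lt_pow_iff_norm_le_pow_sub_one z (-k)
  simp only [Set.mem_ofPred_eq, Set.mem_sdiff, Nat.cast_succ, neg_add, ← sub_eq_add_neg, ← this,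
    not_lt, le_antisymm_iff]

lemma annulus_eq_biUnion_sphere {α : ℤ_[p]} (hα : α ≠ 0) :
    {z : ℤ_[p] | ‖α‖ ≤ ‖z‖ ∧ ‖z‖ ≤ 1} =
      ⋃ k ∈ Finset.range (α.valuation + 1), {z | ‖z‖ = (p : ℝ) ^ (-k : ℤ)} := by
  ext z
  simp only [Set.mem_ofPred_eq, Set.mem_iUnion, Finset.mem_range, Nat.lt_succ_iff, exists_prop,
    norm_le_one, and_true]
  constructor
  · intro h
    have hz : z ≠ 0 := by
      rintro rfl
      exact (norm_pos_iff.2 hα).not_ge (by simpa using h)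
    refine ⟨z.valuation, ?_, norm_eq_zpow_neg_valuation hz⟩
    rwa [norm_eq_zpow_neg_valuation hα, norm_eq_zpow_neg_valuation hz,
      zpow_le_zpow_iff_right₀ one_lt_natCast_prime, neg_le_neg_iff, Nat.cast_le] at h
  · rintro ⟨k, hk, hz⟩
    rw [hz, norm_eq_zpow_neg_valuation hα]
    exact zpow_le_zpow_right₀ one_lt_natCast_prime.le (by omega)

lemma pairwise_disjoint_setOf_norm_eq_zpow :
    Pairwise (Function.onFun Disjoint fun k : ℕ ↦ {z : ℤ_[p] | ‖z‖ = (p : ℝ) ^ (-k : ℤ)}) := by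
  intro j k hjk
  refine Set.disjoint_left.2 fun z (hj : _ = _) (hk : _ = _) ↦ hjk ?_
  have := zpow_right_injective₀ (zero_lt_one.trans one_lt_natCast_prime) one_lt_natCast_prime.ne'
    (hj.symm.trans hk)
  omega

variable [MeasurableSpace ℤ_[p]] [BorelSpace ℤ_[p]] (μ : Measure ℤ_[p]) [IsProbabilityMeasure μ]
  [μ.IsAddLeftInvariant]

lemma measureReal_norm_le_zpow (k : ℕ) :
    μ.real {z : ℤ_[p] | ‖z‖ ≤ (p : ℝ) ^ (-k : ℤ)} = (p : ℝ) ^ (-k : ℤ) := by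
  set H := (toZModPow k : ℤ_[p] →+* ZMod (p ^ k)).toAddMonoidHom.ker
  have hH : {z : ℤ_[p] | ‖z‖ ≤ (p : ℝ) ^ (-k : ℤ)} = H :=
    Set.ext fun z ↦ norm_le_zpow_iff_mem_ker_toZModPow z k
  have : H.FiniteIndex :=
    ⟨by rw [index_ker_toZModPow]; exact pow_ne_zero _ (Fact.out : p.Prime).ne_zero⟩
  have hmeas :=
    H.index_mul_measure (hH ▸ (isClosed_le continuous_norm continuous_const).measurableSet) μ
  rw [index_ker_toZModPow, measure_univ] at hmeas
  rw [hH, measureReal_def, ENNReal.eq_inv_of_mul_eq_one_left ((mul_comm _ _).trans hmeas)]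
  simp

lemma measureReal_norm_eq_zpow (k : ℕ) :
    μ.real {z : ℤ_[p] | ‖z‖ = (p : ℝ) ^ (-k : ℤ)} = (1 - (p : ℝ)⁻¹) * (p : ℝ) ^ (-k : ℤ) := by
  rw [setOf_norm_eq_zpow_eq_sdiff, measureReal_sdiff, measureReal_norm_le_zpow,
    measureReal_norm_le_zpow]
  · push_cast
    rw [neg_add, zpow_add₀ (zero_lt_one.trans one_lt_natCast_prime).ne', zpow_neg_one]
    ring
  · exact Set.ofPred_subset_ofPred.2 fun z hz ↦
      hz.trans (zpow_le_zpow_right₀ one_lt_natCast_prime.le (by push_cast; omega))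
  · exact (isClosed_le continuous_norm continuous_const).measurableSet

lemma setIntegral_sphere_norm_rpow (s : ℝ) (k : ℕ) :
    ∫ z in {z : ℤ_[p] | ‖z‖ = (p : ℝ) ^ (-k : ℤ)}, ‖z‖ ^ s ∂μ =
      (1 - (p : ℝ)⁻¹) * ((p : ℝ) ^ (-s - 1)) ^ k := by
  have hp : (0 : ℝ) < p := zero_lt_one.trans one_lt_natCast_prime
  rw [setIntegral_congr_fun (isClosed_eq continuous_norm continuous_const).measurableSet
    (g := fun _ ↦ ((p : ℝ) ^ (-k : ℤ)) ^ s) fun z (hz : _ = _) ↦ by rw [hz],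
    setIntegral_const, measureReal_norm_eq_zpow, smul_eq_mul, mul_assoc,
    mul_comm ((p : ℝ) ^ (-k : ℤ)), ← Real.rpow_add_one (zpow_pos hp _).ne',
    Real.zpow_neg_natCast_rpow_add_one hp]

lemma setIntegral_annulus_norm_rpow (s : ℝ) {α : ℤ_[p]} (hα : α ≠ 0) :
    ∫ z in {z : ℤ_[p] | ‖α‖ ≤ ‖z‖ ∧ ‖z‖ ≤ 1}, ‖z‖ ^ s ∂μ =
      (1 - (p : ℝ)⁻¹) * ∑ k ∈ Finset.range (α.valuation + 1), ((p : ℝ) ^ (-s - 1)) ^ k := by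
  have hsphere (k : ℕ) : MeasurableSet {z : ℤ_[p] | ‖z‖ = (p : ℝ) ^ (-k : ℤ)} :=
    (isClosed_eq continuous_norm continuous_const).measurableSet
  rw [annulus_eq_biUnion_sphere hα, Finset.mul_sum, integral_biUnion_finset _
    (fun k _ ↦ hsphere k) (pairwise_disjoint_setOf_norm_eq_zpow.set_pairwise _)]
  · exact Finset.sum_congr rfl fun k _ ↦ setIntegral_sphere_norm_rpow μ s k
  · exact fun k _ ↦ IntegrableOn.congr_fun (f := fun _ ↦ ((p : ℝ) ^ (-k : ℤ)) ^ s)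
      (integrableOn_const (measure_ne_top μ _)) (fun z (hz : _ = _) ↦ by rw [hz]) (hsphere k)

end PadicInt

open PadicInt in
theorem stmt12 (p : ℕ) [Fact p.Prime]
    [MeasurableSpace ℤ_[p]] [BorelSpace ℤ_[p]]
    (μ : Measure ℤ_[p]) [μ.IsAddHaarMeasure] (hμ : μ Set.univ = 1)
    (s : ℝ) (hs : -1 < s) (α : ℤ_[p]) (hα : α ≠ 0) :
    ∫ z in {z : ℤ_[p] | ‖α‖ ≤ ‖z‖ ∧ ‖z‖ ≤ 1}, ‖z‖ ^ s ∂μ =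
      (1 - (p : ℝ)⁻¹) / (1 - (p : ℝ) ^ (-s - 1)) *
        (1 - (p : ℝ) ^ (-s - 1) * ‖α‖ ^ (s + 1)) := by
  have : IsProbabilityMeasure μ := ⟨hμ⟩
  have hp : (0 : ℝ) < p := zero_lt_one.trans one_lt_natCast_prime
  have hr : (p : ℝ) ^ (-s - 1) < 1 :=
    Real.rpow_lt_one_of_one_lt_of_neg one_lt_natCast_prime (by linarith)
  rw [setIntegral_annulus_norm_rpow μ s hα, geom_sum_eq hr.ne, norm_eq_zpow_neg_valuation hα,
    Real.zpow_neg_natCast_rpow_add_one hp, ← pow_succ']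
  field_simp [sub_ne_zero.2 hr.ne, sub_ne_zero.2 hr.ne']
  ring
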